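/- arXiv:0909.5280 — 2 statements merged into one kernel-verified Lean document; each statement's English description precedes it below -/
import Mathlib

section
/- Let ℓ be an odd prime and ε ∈ {+1,-1}. Then |{A ∈ GL₂(𝔽_ℓ) : χ(det A) = ε and det(I - A) ≠ 0}| = ½ℓ(ℓ-1)²(ℓ+1) - ((ℓ-1)/2)(ℓ²+ℓ) + ½(1+ε)ℓ, where χ is the quadratic (Legendre) character on 𝔽_ℓ^×. -/
/-!
Write a matrix as its diagonal `(a, e)` and off-diagonal `(b, c)`. Since
`det (1 - A) = 1 - tr A + det A`, for `det A = d ≠ 0` the condition `det (1 - A) ≠ 0` only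
excludes `a + e = 1 + d`. The equation `b c = a e - d` has `q - 1` solutions, or `2q - 1` when
`a e = d`; hence there are `q³ - q` matrices of determinant `d`, and `q² - q + q · #{1, d}` of
them have trace `1 + d`, because then `{a, e} = {1, d}`. Summing over `d` with `χ d = ε`, via
`[χ d = ε] = (χ d ^ 2 + ε χ d) / 2` and `∑ χ = 0`, gives the formula.
-/

open Finset

theorem card_filter_prod {α β : Type*} [Fintype α] [Fintype β] (P : α × β → Prop)
    [DecidablePred P] : #{x | P x} = ∑ a, #{b | P (a, b)} := by
  simp only [card_filter]
  exact Fintype.sum_prod_type _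

theorem card_filter_add_eq {G : Type*} [AddGroup G] [Fintype G] [DecidableEq G] (t : G) :
    #{p : G × G | p.1 + p.2 = t} = Fintype.card G := by
  rw [card_filter_prod, ← card_univ, card_eq_sum_ones]
  refine sum_congr rfl fun a _ => card_eq_one.2 ⟨-a + t, ?_⟩
  ext b
  simp [eq_neg_add_iff_add_eq]

section Domain

variable {R : Type*} [CommRing R] [IsDomain R] [Fintype R] [DecidableEq R]

theorem filter_add_eq_one_add_mul_eq (d : R) :
    ({x : R × R | x.1 + x.2 = 1 + d ∧ x.1 * x.2 = d} : Finset (R × R)) = {(1, d), (d, 1)} := by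
  ext ⟨a, b⟩
  simp only [mem_filter, mem_univ, true_and, mem_insert, mem_singleton, Prod.mk.injEq]
  constructor
  · rintro ⟨hsum, hprod⟩
    obtain rfl : b = 1 + d - a := eq_sub_of_add_eq' hsum
    have : (a - 1) * (a - d) = 0 := by linear_combination -hprod
    rcases mul_eq_zero.1 this with h | h
    · exact .inl ⟨by linear_combination h, by linear_combination -h⟩
    · exact .inr ⟨by linear_combination h, by linear_combination -h⟩
  · rintro (⟨rfl, rfl⟩ | ⟨rfl, rfl⟩) <;> constructor <;> ring

theorem card_filter_add_eq_one_add_mul_eq (d : R) :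
    #{x : R × R | x.1 + x.2 = 1 + d ∧ x.1 * x.2 = d} = if d = 1 then 1 else 2 := by
  rw [filter_add_eq_one_add_mul_eq]
  split_ifs with hd
  · simp [hd]
  · rw [card_pair]; simpa [eq_comm] using hd

end Domain

section FiniteField

variable {F : Type*} [Field F] [Fintype F] [DecidableEq F]

theorem card_filter_mul_eq (t : F) :
    (#{p : F × F | p.1 * p.2 = t} : ℤ) =
      Fintype.card F - 1 + if t = 0 then (Fintype.card F : ℤ) else 0 := by
  have hfiber (a : F) : (#{b | a * b = t} : ℤ) =
      if a = 0 then (if t = 0 then (Fintype.card F : ℤ) else 0) else 1 := by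
    by_cases ha : a = 0
    · subst ha
      by_cases ht : t = 0 <;> simp [ht, eq_comm]
    · rw [if_neg ha, Nat.cast_eq_one, card_eq_one]
      exact ⟨a⁻¹ * t, by ext b; simp [eq_inv_mul_iff_mul_eq₀ ha]⟩
  rw [card_filter_prod, Nat.cast_sum, sum_congr rfl fun a _ => hfiber a,
    ← add_sum_erase _ _ (mem_univ 0), if_pos rfl,
    sum_congr rfl fun a ha => if_neg (ne_of_mem_erase ha), sum_const, card_erase_of_mem (mem_univ 0), card_univ, nsmul_eq_mul, mul_one,
    Nat.cast_pred Fintype.card_pos]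
  ring

theorem card_filter_mul_sub_mul_eq (P : F × F → Prop) [DecidablePred P] (d : F) :
    (#{z : (F × F) × (F × F) | P z.1 ∧ z.1.1 * z.1.2 - z.2.1 * z.2.2 = d} : ℤ) =
      (Fintype.card F - 1) * #{x | P x} + Fintype.card F * #{x | P x ∧ x.1 * x.2 = d} := by
  have hfiber (x : F × F) :
      (#{y : F × F | P x ∧ x.1 * x.2 - y.1 * y.2 = d} : ℤ) =
        if P x then Fintype.card F - 1 + (if x.1 * x.2 = d then (Fintype.card F : ℤ) else 0)
        else 0 := by
    by_cases hx : P x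
    · have hy (y : F × F) : P x ∧ x.1 * x.2 - y.1 * y.2 = d ↔ y.1 * y.2 = x.1 * x.2 - d := by
        rw [and_iff_right hx, eq_sub_iff_add_eq, sub_eq_iff_eq_add', add_comm, eq_comm]
      simp only [hy, card_filter_mul_eq, sub_eq_zero, if_pos hx]
    · simp [hx]
  rw [card_filter_prod, Nat.cast_sum, sum_congr rfl fun x _ => hfiber x, ← sum_filter,
    sum_add_distrib, sum_const, ← sum_filter, sum_const, filter_filter]
  simp only [nsmul_eq_mul]
  ring

theorem sum_quadraticChar_sq : ∑ d : F, quadraticChar F d ^ 2 = Fintype.card F - 1 := by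
  simp_rw [← MulChar.pow_apply' _ two_ne_zero, (quadraticChar_isQuadratic F).sq_eq_one,
    MulChar.sum_one_eq_card_units, Fintype.card_units, Nat.cast_pred Fintype.card_pos]

theorem ite_quadraticChar_eq {ε : ℤ} (hε : ε = 1 ∨ ε = -1) (d : F) :
    (if quadraticChar F d = ε then 1 else 0 : ℚ) =
      ((quadraticChar F d : ℚ) ^ 2 + ε * quadraticChar F d) / 2 := by
  rcases quadraticChar_isQuadratic F d with h | h | h <;> rcases hε with rfl | rfl <;>
    norm_num [h]

theorem sum_ite_quadraticChar_eq (hF : ringChar F ≠ 2) {ε : ℤ} (hε : ε = 1 ∨ ε = -1) (a b : ℚ) :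
    ∑ d : F, (if quadraticChar F d = ε then a + (if d = 1 then b else 0) else 0) =
      (Fintype.card F - 1) / 2 * a + (1 + ε) / 2 * b := by
  have hterm (d : F) : (if quadraticChar F d = ε then a + (if d = 1 then b else 0) else 0) =
      ((quadraticChar F d : ℚ) ^ 2 + ε * quadraticChar F d) / 2 * a +
        if d = 1 then (1 + ε) / 2 * b else 0 := by
    rw [← ite_quadraticChar_eq hε]
    by_cases hd : d = 1
    · subst hd
      rcases hε with rfl | rfl <;> norm_num
    · simp only [hd, if_false, add_zero, ite_mul, one_mul, zero_mul]
  have hsq : ∑ d : F, (quadraticChar F d : ℚ) ^ 2 = Fintype.card F - 1 := by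
    exact_mod_cast sum_quadraticChar_sq
  have hsum : ∑ d : F, (quadraticChar F d : ℚ) = 0 := by
    exact_mod_cast quadraticChar_sum_zero hF
  simp only [hterm, sum_add_distrib, ← sum_mul, ← sum_div, sum_ite_eq', mem_univ, if_true,
    ← mul_sum, hsq, hsum]
  ring

end FiniteField

namespace Matrix

variable {R : Type*}

@[simps]
def finTwoDiagOffDiagEquiv : Matrix (Fin 2) (Fin 2) R ≃ (R × R) × (R × R) where
  toFun A := ((A 0 0, A 1 1), (A 0 1, A 1 0))
  invFun z := !![z.1.1, z.2.1; z.2.2, z.1.2]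
  left_inv A := (eta_fin_two A).symm
  right_inv _ := rfl

theorem det_one_sub_fin_two [CommRing R] (A : Matrix (Fin 2) (Fin 2) R) :
    (1 - A).det = 1 - A.trace + A.det := by
  simp only [det_fin_two, trace_fin_two, sub_apply, one_apply_eq, one_apply_ne zero_ne_one,
    one_apply_ne one_ne_zero]
  ring

theorem card_filter_diag_det_eq [CommRing R] [Fintype R] [DecidableEq R] (P : R × R → Prop)
    [DecidablePred P] (d : R) :
    #{A : Matrix (Fin 2) (Fin 2) R | P (A 0 0, A 1 1) ∧ A.det = d} =
      #{z : (R × R) × (R × R) | P z.1 ∧ z.1.1 * z.1.2 - z.2.1 * z.2.2 = d} :=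
  card_equiv finTwoDiagOffDiagEquiv fun A => by simp [det_fin_two]

variable {F : Type*} [Field F] [Fintype F] [DecidableEq F]

theorem card_det_eq {d : F} (hd : d ≠ 0) :
    (#{A : Matrix (Fin 2) (Fin 2) F | A.det = d} : ℤ) = Fintype.card F ^ 3 - Fintype.card F := by
  have h := card_filter_diag_det_eq (fun _ => True) d
  have h' := card_filter_mul_sub_mul_eq (F := F) (fun _ => True) d
  simp only [true_and, filter_true, card_univ, Fintype.card_prod] at h h'
  rw [h, h', card_filter_mul_eq, if_neg hd]
  push_cast
  ring

theorem card_det_eq_trace_eq (d t : F) :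
    (#{A : Matrix (Fin 2) (Fin 2) F | A.det = d ∧ A.trace = t} : ℤ) =
      (Fintype.card F - 1) * Fintype.card F +
        Fintype.card F * #{x : F × F | x.1 + x.2 = t ∧ x.1 * x.2 = d} := by
  rw [filter_congr fun A _ => by rw [and_comm, trace_fin_two],
    card_filter_diag_det_eq (fun x => x.1 + x.2 = t),
    card_filter_mul_sub_mul_eq (fun x => x.1 + x.2 = t), card_filter_add_eq]

theorem card_det_eq_trace_ne_one_add {d : F} (hd : d ≠ 0) :
    (#{A : Matrix (Fin 2) (Fin 2) F | A.det = d ∧ A.trace ≠ 1 + d} : ℤ) =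
      Fintype.card F ^ 3 - Fintype.card F ^ 2 - 2 * Fintype.card F +
        if d = 1 then (Fintype.card F : ℤ) else 0 := by
  have hsplit := card_filter_add_card_filter_not
    (s := ({A : Matrix (Fin 2) (Fin 2) F | A.det = d} : Finset _)) (fun A => A.trace = 1 + d)
  rw [filter_filter, filter_filter] at hsplit
  zify at hsplit
  have htrace := card_det_eq_trace_eq d (1 + d)
  rw [card_filter_add_eq_one_add_mul_eq] at htrace
  have hdet := card_det_eq hd
  split_ifs at htrace ⊢ <;> push_cast at htrace <;> linear_combination hsplit + hdet - htrace

theorem card_isUnit_quadraticChar_det_eq_and_det_eq {ε : ℤ} (hε : ε = 1 ∨ ε = -1) (d : F) :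
    (#{A : Matrix (Fin 2) (Fin 2) F |
        (IsUnit A ∧ quadraticChar F A.det = ε ∧ (1 - A).det ≠ 0) ∧ A.det = d} : ℤ) =
      if quadraticChar F d = ε then
        Fintype.card F ^ 3 - Fintype.card F ^ 2 - 2 * Fintype.card F +
          if d = 1 then (Fintype.card F : ℤ) else 0
      else 0 := by
  by_cases hχ : quadraticChar F d = ε
  · have hd : d ≠ 0 := by
      rintro rfl
      rw [quadraticChar_zero] at hχ
      rcases hε with rfl | rfl <;> simp at hχ
    have hcond (A : Matrix (Fin 2) (Fin 2) F) :
        (IsUnit A ∧ quadraticChar F A.det = ε ∧ (1 - A).det ≠ 0) ∧ A.det = d ↔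
          A.det = d ∧ A.trace ≠ 1 + d := by
      rw [isUnit_iff_isUnit_det, isUnit_iff_ne_zero, det_one_sub_fin_two]
      constructor
      · rintro ⟨⟨-, -, h⟩, rfl⟩
        exact ⟨rfl, fun htr => h (by rw [htr]; ring)⟩
      · rintro ⟨rfl, htr⟩
        exact ⟨⟨hd, hχ, fun h => htr (by linear_combination -h)⟩, rfl⟩
    rw [if_pos hχ, filter_congr fun A _ => hcond A, card_det_eq_trace_ne_one_add hd]
  · rw [if_neg hχ, Nat.cast_eq_zero, card_eq_zero, filter_eq_empty_iff]
    rintro A - ⟨⟨-, hA, -⟩, rfl⟩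
    exact hχ hA

theorem card_isUnit_quadraticChar_det_eq (hF : ringChar F ≠ 2) {ε : ℤ} (hε : ε = 1 ∨ ε = -1) :
    (#{A : Matrix (Fin 2) (Fin 2) F |
        IsUnit A ∧ quadraticChar F A.det = ε ∧ (1 - A).det ≠ 0} : ℚ) =
      (Fintype.card F - 1) / 2 * (Fintype.card F ^ 3 - Fintype.card F ^ 2 - 2 * Fintype.card F)
        + (1 + ε) / 2 * Fintype.card F := by
  have hfiber (d : F) :
      (#{A : Matrix (Fin 2) (Fin 2) F |
          (IsUnit A ∧ quadraticChar F A.det = ε ∧ (1 - A).det ≠ 0) ∧ A.det = d} : ℚ) =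
        if quadraticChar F d = ε then
          (Fintype.card F ^ 3 - Fintype.card F ^ 2 - 2 * Fintype.card F : ℚ) +
            if d = 1 then (Fintype.card F : ℚ) else 0
        else 0 := by
    exact_mod_cast card_isUnit_quadraticChar_det_eq_and_det_eq hε d
  rw [card_eq_sum_card_fiberwise fun A _ => mem_univ A.det, Nat.cast_sum]
  simp only [filter_filter, hfiber]
  exact sum_ite_quadraticChar_eq hF hε _ _

end Matrix

/-- For an odd prime `ℓ` and `ε ∈ {±1}`, the number of `A ∈ GL₂(𝔽_ℓ)` with
`χ(det A) = ε` and `det(I - A) ≠ 0` (where `χ` is the quadratic character of `𝔽_ℓ`)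
equals `½ℓ(ℓ-1)²(ℓ+1) - ((ℓ-1)/2)(ℓ²+ℓ) + ½(1+ε)ℓ`. -/
theorem stmt_5 (ℓ : ℕ) [Fact ℓ.Prime] (hodd : ℓ ≠ 2) (ε : ℤ) (hε : ε = 1 ∨ ε = -1) :
    (Nat.card {A : Matrix (Fin 2) (Fin 2) (ZMod ℓ) //
        IsUnit A ∧ quadraticChar (ZMod ℓ) A.det = ε ∧ (1 - A).det ≠ 0} : ℚ) =
      (ℓ : ℚ) * ((ℓ : ℚ) - 1) ^ 2 * ((ℓ : ℚ) + 1) / 2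
        - (((ℓ : ℚ) - 1) / 2) * ((ℓ : ℚ) ^ 2 + ℓ)
        + (1 + (ε : ℚ)) * ℓ / 2 := by
  have hF : ringChar (ZMod ℓ) ≠ 2 := by rwa [ZMod.ringChar_zmod_n]
  rw [Nat.card_eq_fintype_card, Fintype.card_subtype,
    Matrix.card_isUnit_quadraticChar_det_eq hF hε, ZMod.card]
  ring
end

section
/- Let ℓ be an odd prime and let Y⁺ (resp. Y⁻) be the set of A ∈ GL₂(𝔽_ℓ) with Legendre symbol of det(A) equal to +1 (resp. -1) and det(I-A) ≠ 0. Then (|Y⁺| + |Y⁻|)/(|GL₂(𝔽_ℓ)|(1-1/ℓ)) = 1 - (ℓ²-ℓ-1)/((ℓ-1)³(ℓ+1)) and (|Y⁺| - |Y⁻|)/(|GL₂(𝔽_ℓ)|(1-1/ℓ)) = ℓ/((ℓ-1)³(ℓ+1)). -/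
open Finset

section helpers

variable (ℓ : ℕ) [hp : Fact ℓ.Prime]

lemma sum_ind_mul (x : ZMod ℓ) :
    ∑ b : ZMod ℓ, ∑ c : ZMod ℓ, (if b * c = x then (1:ℚ) else 0)
      = ((ℓ : ℚ) - 1) + (if x = 0 then (ℓ:ℚ) else 0) := by
  classical
  rw [← Finset.add_sum_erase Finset.univ _ (Finset.mem_univ (0 : ZMod ℓ))]
  have h0 : ∑ c : ZMod ℓ, (if (0 : ZMod ℓ) * c = x then (1:ℚ) else 0)
      = (if x = 0 then (ℓ:ℚ) else 0) := by
    rcases eq_or_ne x 0 with h | h <;>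
      simp [h, eq_comm, Finset.card_univ, ZMod.card]
  have h1 : ∀ b ∈ Finset.univ.erase (0 : ZMod ℓ),
      (∑ c : ZMod ℓ, (if b * c = x then (1:ℚ) else 0)) = 1 := by
    intro b hb
    have hb0 : b ≠ 0 := (Finset.mem_erase.mp hb).1
    have hiff : ∀ c : ZMod ℓ, (b * c = x) ↔ (c = b⁻¹ * x) := by
      intro c
      constructor
      · rintro rfl; rw [← mul_assoc, inv_mul_cancel₀ hb0, one_mul]
      · rintro rfl; rw [← mul_assoc, mul_inv_cancel₀ hb0, one_mul]
    simp only [hiff]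
    simp
  rw [Finset.sum_congr rfl h1, h0, Finset.sum_const, Finset.card_erase_of_mem (Finset.mem_univ _),
    Finset.card_univ, ZMod.card]
  have h2 : (1:ℕ) ≤ ℓ := le_of_lt hp.out.one_lt
  rw [nsmul_eq_mul, mul_one, Nat.cast_sub h2]
  push_cast
  ring

lemma sum_chi_affine (hodd : ℓ ≠ 2) (r s : ZMod ℓ) :
    ∑ x : ZMod ℓ, ((quadraticChar (ZMod ℓ) (r * x + s) : ℤ) : ℚ)
      = if r = 0 then (ℓ:ℚ) * ((quadraticChar (ZMod ℓ) s : ℤ) : ℚ) else 0 := by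
  rcases eq_or_ne r 0 with hr | hr
  · simp [hr, Finset.card_univ, ZMod.card, mul_comm]
  · rw [if_neg hr]
    have hsum : ∑ y : ZMod ℓ, ((quadraticChar (ZMod ℓ) y : ℤ) : ℚ) = 0 := by
      have h := quadraticChar_sum_zero (F := ZMod ℓ) (by
        rw [ZMod.ringChar_zmod_n]; exact hodd)
      exact_mod_cast congrArg (fun z : ℤ => (z : ℚ)) h
    rw [← hsum, ← Equiv.sum_comp ((Equiv.mulLeft₀ r hr).trans (Equiv.addRight s))
      (fun y => ((quadraticChar (ZMod ℓ) y : ℤ) : ℚ))]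
    rfl

def toMat : ((ZMod ℓ × ZMod ℓ) × (ZMod ℓ × ZMod ℓ)) ≃ Matrix (Fin 2) (Fin 2) (ZMod ℓ) where
  toFun q := !![q.1.1, q.2.1; q.2.2, q.1.2]
  invFun A := ((A 0 0, A 1 1), (A 0 1, A 1 0))
  left_inv q := by obtain ⟨⟨a, d⟩, ⟨b, c⟩⟩ := q; simp
  right_inv A := (Matrix.eta_fin_two A).symm

lemma card_eq_sum (P : Matrix (Fin 2) (Fin 2) (ZMod ℓ) → Prop) [DecidablePred P] :
    (Nat.card {A : Matrix (Fin 2) (Fin 2) (ZMod ℓ) // P A} : ℚ)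
      = ∑ a : ZMod ℓ, ∑ d : ZMod ℓ, ∑ b : ZMod ℓ, ∑ c : ZMod ℓ,
          (if P !![a, b; c, d] then (1:ℚ) else 0) := by
  rw [Nat.card_eq_fintype_card, Fintype.card_subtype, Finset.card_filter]
  rw [← Equiv.sum_comp (toMat ℓ) (fun A => if P A then (1:ℕ) else 0)]
  rw [Nat.cast_sum]
  simp only [apply_ite (Nat.cast : ℕ → ℚ), Nat.cast_one, Nat.cast_zero]
  simp only [Fintype.sum_prod_type]
  rfl

lemma det_one_sub (a b c d : ZMod ℓ) :
    ((1 : Matrix (Fin 2) (Fin 2) (ZMod ℓ)) - !![a, b; c, d]).det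
      = (1 - a) * (1 - d) - b * c := by
  simp [Matrix.det_fin_two, Matrix.sub_apply, Matrix.one_apply]

lemma inner_count (u : ZMod ℓ) :
    ∑ b : ZMod ℓ, ∑ c : ZMod ℓ, (if u - b * c ≠ 0 then (1:ℚ) else 0)
      = (ℓ:ℚ)^2 - (((ℓ:ℚ) - 1) + (if u = 0 then (ℓ:ℚ) else 0)) := by
  have hpt : ∀ b c : ZMod ℓ,
      (if u - b * c ≠ 0 then (1:ℚ) else 0) = 1 - (if b * c = u then 1 else 0) := by
    intro b c
    rcases eq_or_ne (b * c) u with h | h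
    · simp [h]
    · simp [h, sub_ne_zero.mpr h.symm]
  simp only [hpt, Finset.sum_sub_distrib, Finset.sum_const, Finset.card_univ, ZMod.card,
    nsmul_eq_mul, mul_one, sum_ind_mul]
  ring

lemma count_G :
    (Nat.card {A : Matrix (Fin 2) (Fin 2) (ZMod ℓ) // IsUnit A} : ℚ)
      = (ℓ:ℚ)^4 - (ℓ:ℚ)^3 - (ℓ:ℚ)^2 + (ℓ:ℚ) := by
  classical
  have hiff : ∀ A : Matrix (Fin 2) (Fin 2) (ZMod ℓ), IsUnit A ↔ A.det ≠ 0 := by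
    intro A
    rw [Matrix.isUnit_iff_isUnit_det, isUnit_iff_ne_zero]
  rw [Nat.card_congr (Equiv.subtypeEquivRight hiff)]
  rw [card_eq_sum]
  simp only [Matrix.det_fin_two_of]
  simp only [inner_count]
  have hsplit : ∀ a d : ZMod ℓ, (if a * d = 0 then (ℓ:ℚ) else 0)
      = (ℓ:ℚ) * (if a * d = 0 then (1:ℚ) else 0) := by
    intro a d; split_ifs <;> ring
  simp only [hsplit, Finset.sum_sub_distrib, Finset.sum_add_distrib, ← Finset.mul_sum,
    Finset.sum_const, Finset.card_univ, ZMod.card, nsmul_eq_mul, mul_one, sum_ind_mul]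
  norm_num
  ring

lemma sum_one_sub (f : ZMod ℓ → ℚ) : ∑ x : ZMod ℓ, f (1 - x) = ∑ x : ZMod ℓ, f x := by
  rw [← Equiv.sum_comp (Equiv.subLeft (1 : ZMod ℓ)) f]
  simp only [Equiv.subLeft_apply]

lemma inner_count2 (u v : ZMod ℓ) :
    ∑ b : ZMod ℓ, ∑ c : ZMod ℓ, (if u - b * c ≠ 0 ∧ v - b * c ≠ 0 then (1:ℚ) else 0)
      = (ℓ:ℚ)^2 - (((ℓ:ℚ) - 1) + (if u = 0 then (ℓ:ℚ) else 0))
          - (((ℓ:ℚ) - 1) + (if v = 0 then (ℓ:ℚ) else 0))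
          + (if u = v then (1:ℚ) else 0) * (((ℓ:ℚ) - 1) + (if u = 0 then (ℓ:ℚ) else 0)) := by
  have hpt : ∀ b c : ZMod ℓ,
      (if u - b * c ≠ 0 ∧ v - b * c ≠ 0 then (1:ℚ) else 0)
        = 1 - (if b * c = u then 1 else 0) - (if b * c = v then 1 else 0)
          + (if u = v then (1:ℚ) else 0) * (if b * c = u then 1 else 0) := by
    intro b c
    by_cases h1 : b * c = u <;> by_cases h2 : b * c = v
    · have huv : u = v := h1 ▸ h2
      simp [h1, h2, huv]
    · have huv : u ≠ v := fun h => h2 (h ▸ h1)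
      simp [h1, h2, huv, sub_ne_zero.mpr (Ne.symm h2)]
    · have huv : u ≠ v := fun h => h1 (by rw [h, h2])
      simp [h1, h2, huv, huv.symm]
    · simp [h1, h2, sub_ne_zero.mpr (Ne.symm h1), sub_ne_zero.mpr (Ne.symm h2)]
  simp only [hpt, Finset.sum_add_distrib, Finset.sum_sub_distrib, Finset.sum_const,
    Finset.card_univ, ZMod.card, nsmul_eq_mul, mul_one, ← Finset.mul_sum, sum_ind_mul]
  ring

lemma sum_E_mul : ∑ a : ZMod ℓ, ∑ d : ZMod ℓ, (if a * d = 0 then (ℓ:ℚ) else 0)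
    = (ℓ:ℚ) * (((ℓ:ℚ) - 1) + (ℓ:ℚ)) := by
  have hsplit : ∀ a d : ZMod ℓ, (if a * d = 0 then (ℓ:ℚ) else 0)
      = (ℓ:ℚ) * (if a * d = 0 then (1:ℚ) else 0) := by
    intro a d; split_ifs <;> ring
  simp only [hsplit, ← Finset.mul_sum, sum_ind_mul]
  norm_num

lemma sum_E_mul' : ∑ a : ZMod ℓ, ∑ d : ZMod ℓ, (if (1 - a) * (1 - d) = 0 then (ℓ:ℚ) else 0)
    = (ℓ:ℚ) * (((ℓ:ℚ) - 1) + (ℓ:ℚ)) := by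
  have h1 : ∀ a : ZMod ℓ, ∑ d : ZMod ℓ, (if (1 - a) * (1 - d) = 0 then (ℓ:ℚ) else 0)
      = ∑ d : ZMod ℓ, (if (1 - a) * d = 0 then (ℓ:ℚ) else 0) := by
    intro a
    exact sum_one_sub ℓ (fun d => if (1 - a) * d = 0 then (ℓ:ℚ) else 0)
  rw [Finset.sum_congr rfl (fun a _ => h1 a),
    sum_one_sub ℓ (fun a => ∑ d : ZMod ℓ, (if a * d = 0 then (ℓ:ℚ) else 0))]
  exact sum_E_mul ℓ

lemma sum_diag :
    ∑ a : ZMod ℓ, ∑ d : ZMod ℓ, ((if a * d = (1 - a) * (1 - d) then (1:ℚ) else 0) *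
        (((ℓ:ℚ) - 1) + (if a * d = 0 then (ℓ:ℚ) else 0)))
      = (ℓ:ℚ) * ((ℓ:ℚ) - 1) + 2 * (ℓ:ℚ) := by
  have hcond : ∀ a d : ZMod ℓ, (a * d = (1 - a) * (1 - d)) ↔ (d = 1 - a) := by
    intro a d
    constructor <;> intro h <;> linear_combination h
  have hpt : ∀ a d : ZMod ℓ, ((if a * d = (1 - a) * (1 - d) then (1:ℚ) else 0) *
        (((ℓ:ℚ) - 1) + (if a * d = 0 then (ℓ:ℚ) else 0)))
      = (if d = 1 - a then (((ℓ:ℚ) - 1) + (if a * d = 0 then (ℓ:ℚ) else 0)) else 0) := by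
    intro a d
    by_cases h : d = 1 - a
    · rw [if_pos ((hcond a d).mpr h), if_pos h, one_mul]
    · rw [if_neg (fun hh => h ((hcond a d).mp hh)), if_neg h, zero_mul]
  simp only [hpt, Finset.sum_ite_eq' Finset.univ, Finset.mem_univ, if_true]
  have hpt2 : ∀ a : ZMod ℓ,
      (((ℓ:ℚ) - 1) + (if a * (1 - a) = 0 then (ℓ:ℚ) else 0))
        = ((ℓ:ℚ) - 1) + ((if a = 0 then (ℓ:ℚ) else 0) + (if a = 1 then (ℓ:ℚ) else 0)) := by
    intro a
    by_cases h0 : a = 0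
    · simp [h0]
    · by_cases h1 : a = 1
      · simp [h1]
      · have : a * (1 - a) ≠ 0 :=
          mul_ne_zero h0 (sub_ne_zero.mpr (fun h => h1 h.symm))
      
        simp [h0, h1, this]
  simp only [hpt2, Finset.sum_add_distrib, Finset.sum_const, Finset.card_univ, ZMod.card,
    nsmul_eq_mul, Finset.sum_ite_eq' Finset.univ, Finset.mem_univ, if_true]
  ring

lemma count_S1 :
    ∑ a : ZMod ℓ, ∑ d : ZMod ℓ, ∑ b : ZMod ℓ, ∑ c : ZMod ℓ,
        (if a * d - b * c ≠ 0 ∧ (1 - a) * (1 - d) - b * c ≠ 0 then (1:ℚ) else 0)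
      = (ℓ:ℚ)^4 - 2 * (ℓ:ℚ)^3 - (ℓ:ℚ)^2 + 3 * (ℓ:ℚ) := by
  simp only [inner_count2]
  simp only [sub_add_eq_sub_sub_swap, Finset.sum_add_distrib, Finset.sum_sub_distrib,
    Finset.sum_const, Finset.card_univ, ZMod.card, nsmul_eq_mul]
  rw [sum_E_mul, sum_E_mul', sum_diag]
  ring

lemma count_T1 (hodd : ℓ ≠ 2) :
    ∑ a : ZMod ℓ, ∑ d : ZMod ℓ, ∑ b : ZMod ℓ, ∑ c : ZMod ℓ,
      ((quadraticChar (ZMod ℓ) (a * d - b * c) : ℤ) : ℚ) = 0 := by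
  have hin : ∀ a d b : ZMod ℓ,
      ∑ c : ZMod ℓ, ((quadraticChar (ZMod ℓ) (a * d - b * c) : ℤ) : ℚ)
        = if b = 0 then (ℓ:ℚ) * ((quadraticChar (ZMod ℓ) (a * d) : ℤ) : ℚ) else 0 := by
    intro a d b
    rw [Finset.sum_congr rfl (fun c _ => by rw [show a * d - b * c = (-b) * c + a * d by ring])]
    rw [sum_chi_affine ℓ hodd (-b) (a * d)]
    simp [neg_eq_zero]
  simp only [hin]
  have h2 : ∀ a : ZMod ℓ, ∑ d : ZMod ℓ, ((quadraticChar (ZMod ℓ) (a * d) : ℤ) : ℚ) = 0 := by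
    intro a
    rw [Finset.sum_congr rfl (fun d _ => by rw [show a * d = a * d + 0 from (add_zero _).symm])]
    rw [sum_chi_affine ℓ hodd a 0]
    simp
  simp only [Finset.sum_ite_eq' Finset.univ, Finset.mem_univ, if_true, ← Finset.mul_sum, h2,
    mul_zero, Finset.sum_const_zero]

lemma count_T2 (hodd : ℓ ≠ 2) :
    ∑ a : ZMod ℓ, ∑ d : ZMod ℓ, ∑ b : ZMod ℓ, ∑ c : ZMod ℓ,
      ((if b * c = (1 - a) * (1 - d) then (1:ℚ) else 0) *
        ((quadraticChar (ZMod ℓ) (a + d - 1) : ℤ) : ℚ))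
      = -(ℓ:ℚ) := by
  have hd0 : ∀ a : ZMod ℓ, ∑ d : ZMod ℓ, ((quadraticChar (ZMod ℓ) (a + d - 1) : ℤ) : ℚ) = 0 := by
    intro a
    rw [Finset.sum_congr rfl (fun d _ => by rw [show a + d - 1 = 1 * d + (a - 1) by ring])]
    rw [sum_chi_affine ℓ hodd 1 (a - 1)]
    simp
  have hin : ∀ a d : ZMod ℓ, ∑ b : ZMod ℓ, ∑ c : ZMod ℓ,
      ((if b * c = (1 - a) * (1 - d) then (1:ℚ) else 0) *
        ((quadraticChar (ZMod ℓ) (a + d - 1) : ℤ) : ℚ))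
      = (((ℓ:ℚ) - 1) + (if (1 - a) * (1 - d) = 0 then (ℓ:ℚ) else 0)) *
          ((quadraticChar (ZMod ℓ) (a + d - 1) : ℤ) : ℚ) := by
    intro a d
    simp only [← Finset.sum_mul]
    rw [sum_ind_mul]
  simp only [hin, add_mul]
  have hE : ∀ a d : ZMod ℓ,
      (if (1 - a) * (1 - d) = 0 then (ℓ:ℚ) else 0) *
          ((quadraticChar (ZMod ℓ) (a + d - 1) : ℤ) : ℚ)
        = (if a = 1 then (ℓ:ℚ) * ((quadraticChar (ZMod ℓ) (a + d - 1) : ℤ) : ℚ) else 0)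
          + (if d = 1 then (ℓ:ℚ) * ((quadraticChar (ZMod ℓ) (a + d - 1) : ℤ) : ℚ) else 0)
          - (if a = 1 then
              (if d = 1 then (ℓ:ℚ) * ((quadraticChar (ZMod ℓ) (a + d - 1) : ℤ) : ℚ) else 0)
             else 0) := by
    intro a d
    by_cases ha : a = 1 <;> by_cases hd : d = 1
    · have h0 : (1 - a) * (1 - d) = 0 := by rw [ha]; ring
      simp [ha, hd, h0]
    · have h0 : (1 - a) * (1 - d) = 0 := by rw [ha]; ring
      simp [ha, hd, h0]
    · have h0 : (1 - a) * (1 - d) = 0 := by rw [hd]; ring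
      simp [ha, hd, h0]
    · have h0 : (1 - a) * (1 - d) ≠ 0 :=
        mul_ne_zero (sub_ne_zero.mpr (fun h => ha h.symm))
          (sub_ne_zero.mpr (fun h => hd h.symm))
      simp [ha, hd, h0]
  simp only [hE]
  have hpull : ∀ (X : ZMod ℓ → ℚ) (P : Prop) [Decidable P],
      ∑ d : ZMod ℓ, (if P then X d else 0) = if P then ∑ d : ZMod ℓ, X d else 0 := by
    intro X P _
    split_ifs <;> simp
  simp only [Finset.sum_add_distrib, Finset.sum_sub_distrib, hpull, ← Finset.mul_sum, hd0,
    mul_zero, ite_self, Finset.sum_const_zero, Finset.sum_ite_eq' Finset.univ, Finset.mem_univ,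
    if_true]
  have hchi0 : ∑ x : ZMod ℓ, ((quadraticChar (ZMod ℓ) x : ℤ) : ℚ) = 0 := by
    have h := quadraticChar_sum_zero (F := ZMod ℓ) (by rw [ZMod.ringChar_zmod_n]; exact hodd)
    exact_mod_cast congrArg (fun z : ℤ => (z : ℚ)) h
  simp only [add_sub_cancel_right, MulChar.map_one, Int.cast_one, mul_one, hchi0, mul_zero]
  ring

lemma count_S2 (hodd : ℓ ≠ 2) :
    ∑ a : ZMod ℓ, ∑ d : ZMod ℓ, ∑ b : ZMod ℓ, ∑ c : ZMod ℓ,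
      (((quadraticChar (ZMod ℓ) (a * d - b * c) : ℤ) : ℚ) *
        (if (1 - a) * (1 - d) - b * c ≠ 0 then (1:ℚ) else 0))
      = (ℓ:ℚ) := by
  have hpt : ∀ a d b c : ZMod ℓ,
      (((quadraticChar (ZMod ℓ) (a * d - b * c) : ℤ) : ℚ) *
        (if (1 - a) * (1 - d) - b * c ≠ 0 then (1:ℚ) else 0))
      = ((quadraticChar (ZMod ℓ) (a * d - b * c) : ℤ) : ℚ)
        - ((if b * c = (1 - a) * (1 - d) then (1:ℚ) else 0) *
            ((quadraticChar (ZMod ℓ) (a + d - 1) : ℤ) : ℚ)) := by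
    intro a d b c
    by_cases h : b * c = (1 - a) * (1 - d)
    · have h0 : (1 - a) * (1 - d) - b * c = 0 := by rw [h]; ring
      have harg : a * d - b * c = a + d - 1 := by linear_combination -h
      rw [harg]
      simp [h, h0]
    · have h0 : (1 - a) * (1 - d) - b * c ≠ 0 := sub_ne_zero.mpr (Ne.symm h)
      simp [h, h0]
  simp only [hpt, Finset.sum_sub_distrib]
  rw [count_T1 ℓ hodd, count_T2 ℓ hodd]
  ring

end helpers

section helpers3
variable (ℓ : ℕ) [hp : Fact ℓ.Prime]

lemma hplus_pt (u w : ZMod ℓ) :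
    (if quadraticChar (ZMod ℓ) u = 1 ∧ w ≠ 0 then (1:ℚ) else 0)
      + (if quadraticChar (ZMod ℓ) u = -1 ∧ w ≠ 0 then (1:ℚ) else 0)
    = if u ≠ 0 ∧ w ≠ 0 then (1:ℚ) else 0 := by
  by_cases hw : w = 0
  · simp [hw]
  · rcases eq_or_ne u 0 with hu | hu
    · simp [hu, hw, quadraticChar_zero]
    · rcases quadraticChar_dichotomy hu with h | h <;>
        simp [h, hu, hw] <;> norm_num

lemma hdiff_pt (u w : ZMod ℓ) :
    (if quadraticChar (ZMod ℓ) u = 1 ∧ w ≠ 0 then (1:ℚ) else 0)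
      - (if quadraticChar (ZMod ℓ) u = -1 ∧ w ≠ 0 then (1:ℚ) else 0)
    = ((quadraticChar (ZMod ℓ) u : ℤ) : ℚ) * (if w ≠ 0 then (1:ℚ) else 0) := by
  by_cases hw : w = 0
  · simp [hw]
  · rcases eq_or_ne u 0 with hu | hu
    · simp [hu, hw, quadraticChar_zero]
    · rcases quadraticChar_dichotomy hu with h | h <;>
        simp [h, hu, hw] <;> norm_num

end helpers3




/-- For an odd prime `ℓ`, with `Y⁺` (resp. `Y⁻`) the set of `A ∈ GL₂(𝔽_ℓ)` whose
determinant has quadratic character `+1` (resp. `-1`) and with `det(I-A) ≠ 0`, one has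
`(|Y⁺|+|Y⁻|)/(|GL₂(𝔽_ℓ)|(1-1/ℓ)) = 1 - (ℓ²-ℓ-1)/((ℓ-1)³(ℓ+1))` and
`(|Y⁺|-|Y⁻|)/(|GL₂(𝔽_ℓ)|(1-1/ℓ)) = ℓ/((ℓ-1)³(ℓ+1))`. -/
theorem stmt_6 (ℓ : ℕ) [Fact ℓ.Prime] (hodd : ℓ ≠ 2)
    (Yplus Yminus : ℚ)
    (hYp : Yplus = (Nat.card {A : Matrix (Fin 2) (Fin 2) (ZMod ℓ) //
        IsUnit A ∧ quadraticChar (ZMod ℓ) A.det = 1 ∧ (1 - A).det ≠ 0} : ℚ))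
    (hYm : Yminus = (Nat.card {A : Matrix (Fin 2) (Fin 2) (ZMod ℓ) //
        IsUnit A ∧ quadraticChar (ZMod ℓ) A.det = -1 ∧ (1 - A).det ≠ 0} : ℚ))
    (G : ℚ)
    (hG : G = (Nat.card {A : Matrix (Fin 2) (Fin 2) (ZMod ℓ) // IsUnit A} : ℚ)) :
    (Yplus + Yminus) / (G * (1 - 1 / (ℓ : ℚ))) =
        1 - ((ℓ : ℚ) ^ 2 - ℓ - 1) / (((ℓ : ℚ) - 1) ^ 3 * ((ℓ : ℚ) + 1)) ∧
      (Yplus - Yminus) / (G * (1 - 1 / (ℓ : ℚ))) =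
        (ℓ : ℚ) / (((ℓ : ℚ) - 1) ^ 3 * ((ℓ : ℚ) + 1)) := by
  classical
  have hl3 : 3 ≤ ℓ := by
    have h2 := (Fact.out : ℓ.Prime).two_le
    omega
  have hdetne : ∀ (A : Matrix (Fin 2) (Fin 2) (ZMod ℓ)) (ε : ℤ), ε ≠ 0 →
      quadraticChar (ZMod ℓ) A.det = ε → IsUnit A := by
    intro A ε hε hχ
    rw [Matrix.isUnit_iff_isUnit_det, isUnit_iff_ne_zero]
    intro h0
    rw [h0, quadraticChar_zero] at hχ
    exact hε hχ.symm
  have hiff1 : ∀ A : Matrix (Fin 2) (Fin 2) (ZMod ℓ),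
      (IsUnit A ∧ quadraticChar (ZMod ℓ) A.det = 1 ∧ (1 - A).det ≠ 0)
        ↔ (quadraticChar (ZMod ℓ) A.det = 1 ∧ (1 - A).det ≠ 0) :=
    fun A => ⟨fun h => h.2, fun h => ⟨hdetne A 1 one_ne_zero h.1, h⟩⟩
  have hiff2 : ∀ A : Matrix (Fin 2) (Fin 2) (ZMod ℓ),
      (IsUnit A ∧ quadraticChar (ZMod ℓ) A.det = -1 ∧ (1 - A).det ≠ 0)
        ↔ (quadraticChar (ZMod ℓ) A.det = -1 ∧ (1 - A).det ≠ 0) :=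
    fun A => ⟨fun h => h.2, fun h => ⟨hdetne A (-1) (by norm_num) h.1, h⟩⟩
  have hYp' : Yplus = ∑ a : ZMod ℓ, ∑ d : ZMod ℓ, ∑ b : ZMod ℓ, ∑ c : ZMod ℓ,
      (if quadraticChar (ZMod ℓ) (a * d - b * c) = 1 ∧ (1 - a) * (1 - d) - b * c ≠ 0
        then (1:ℚ) else 0) := by
    rw [hYp, Nat.card_congr (Equiv.subtypeEquivRight hiff1), card_eq_sum]
    simp only [Matrix.det_fin_two_of, det_one_sub]
  have hYm' : Yminus = ∑ a : ZMod ℓ, ∑ d : ZMod ℓ, ∑ b : ZMod ℓ, ∑ c : ZMod ℓ,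
      (if quadraticChar (ZMod ℓ) (a * d - b * c) = -1 ∧ (1 - a) * (1 - d) - b * c ≠ 0
        then (1:ℚ) else 0) := by
    rw [hYm, Nat.card_congr (Equiv.subtypeEquivRight hiff2), card_eq_sum]
    simp only [Matrix.det_fin_two_of, det_one_sub]
  have hS : Yplus + Yminus = (ℓ:ℚ)^4 - 2 * (ℓ:ℚ)^3 - (ℓ:ℚ)^2 + 3 * (ℓ:ℚ) := by
    rw [hYp', hYm', ← count_S1 ℓ, ← Finset.sum_add_distrib]
    refine Finset.sum_congr rfl fun a _ => ?_
    rw [← Finset.sum_add_distrib]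
    refine Finset.sum_congr rfl fun d _ => ?_
    rw [← Finset.sum_add_distrib]
    refine Finset.sum_congr rfl fun b _ => ?_
    rw [← Finset.sum_add_distrib]
    refine Finset.sum_congr rfl fun c _ => ?_
    exact hplus_pt ℓ (a * d - b * c) ((1 - a) * (1 - d) - b * c)
  have hD : Yplus - Yminus = (ℓ:ℚ) := by
    rw [hYp', hYm', ← count_S2 ℓ hodd, ← Finset.sum_sub_distrib]
    refine Finset.sum_congr rfl fun a _ => ?_
    rw [← Finset.sum_sub_distrib]
    refine Finset.sum_congr rfl fun d _ => ?_
    rw [← Finset.sum_sub_distrib]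
    refine Finset.sum_congr rfl fun b _ => ?_
    rw [← Finset.sum_sub_distrib]
    refine Finset.sum_congr rfl fun c _ => ?_
    exact hdiff_pt ℓ (a * d - b * c) ((1 - a) * (1 - d) - b * c)
  have hG2 : G = (ℓ:ℚ)^4 - (ℓ:ℚ)^3 - (ℓ:ℚ)^2 + (ℓ:ℚ) := hG.trans (count_G ℓ)
  have hlq : (3:ℚ) ≤ (ℓ:ℚ) := by exact_mod_cast hl3
  have h0 : (ℓ:ℚ) ≠ 0 := by intro h; rw [h] at hlq; norm_num at hlq
  have h1 : (ℓ:ℚ) - 1 ≠ 0 := by intro h; nlinarith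
  have h2 : (ℓ:ℚ) + 1 ≠ 0 := by intro h; nlinarith
  have hden : G * (1 - 1 / (ℓ:ℚ)) = ((ℓ:ℚ) - 1)^3 * ((ℓ:ℚ) + 1) := by
    rw [hG2]
    field_simp
    ring
  have hdne : ((ℓ:ℚ) - 1)^3 * ((ℓ:ℚ) + 1) ≠ 0 := mul_ne_zero (pow_ne_zero _ h1) h2
  constructor
  · rw [hden, div_eq_iff hdne, hS]
    field_simp
    ring
  · rw [hden, div_eq_iff hdne, hD]
    field_simp
end
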